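/- Let G be a group, and let X₁ and X₂ be two finite generating sets of G, with alphabets A₁ = X₁ ⊕ X₁ and A₂ = X₂ ⊕ X₂ and canonical monoid homomorphisms π₁ : A₁* → G and π₂ : A₂* → G. If the word problem W_{A₁}(G) = { w ∈ A₁* : π₁(w) = 1 } is a context-free language, then the word problem W_{A₂}(G) = { w ∈ A₂* : π₂(w) = 1 } is also a context-free language. -/

import Mathlib

/-- The canonical monoid homomorphism `A* → G` for the alphabet `A = X ⊕ X`,
sending the first copy of `x` to `f x` and the second copy to `(f x)⁻¹`. -/
def wordProblemHom {X G : Type} [Group G] (f : X → G) : FreeMonoid (X ⊕ X) →* G :=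
  FreeMonoid.lift (Sum.elim f fun x => (f x)⁻¹)

/-- The word problem of `G` with respect to the alphabet `A = X ⊕ X`. -/
def wordProblem {X G : Type} [Group G] (f : X → G) : Language (X ⊕ X) :=
  { w : List (X ⊕ X) | wordProblemHom f (FreeMonoid.ofList w) = 1 }

/-!
Fix a letter `x₀ ∈ X₁` and code each letter `a` of `A₂` by a word `c a = x₀ x₀⁻¹ v` over `A₁` with
`π₁ v = π₂ a`. Then `π₁ (c w) = π₂ w` for the induced homomorphism `c : A₂* → A₁*`, so
`W_{A₂}(G) = c⁻¹(W_{A₁}(G))`, and it suffices that context-free languages are closed under inverse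
images of homomorphisms that erase no letter. Such a preimage is the image of the language under a
finite-state transducer that reads a word of `A₁*` code word by code word and outputs the decoded
letters. A grammar for it is obtained from one for the original language by the triple
construction: the nonterminal `(B, p, q)` derives the outputs of the runs from state `p` to state
`q` that read a word derived from `B`. If `X₁` is empty, `G` is trivial and `W_{A₂}(G) = A₂*`.
-/

section Transducer
variable {Δ S Q N : Type}

/-- Runs of a nondeterministic finite-state transducer: `δ p d p' o` allows it, in state `p`, to
read the letter `d`, move to `p'` and write `o`. -/
inductive Transduces (δ : Q → Δ → Q → Option S → Prop) : Q → List Δ → Q → List S → Prop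
  | nil (q : Q) : Transduces δ q [] q []
  | cons {p p' q : Q} {d : Δ} {o : Option S} {u : List Δ} {w : List S} :
      δ p d p' o → Transduces δ p' u q w → Transduces δ p (d :: u) q (o.toList ++ w)

/-- `α'` is obtained from the sentential form `α` by replacing each terminal with the output of a
step of the transducer and annotating each nonterminal `B` as `(B, p, m)`, where `p` and `m` are the
states before and after the (yet underived) word of `B`. -/
inductive TransducesForm (δ : Q → Δ → Q → Option S → Prop) :
    Q → List (Symbol Δ N) → List (Symbol S (N × Q × Q)) → Q → Prop
  | nil (q : Q) : TransducesForm δ q [] [] q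
  | nonterminal {p m q : Q} {α : List (Symbol Δ N)} {α' : List (Symbol S (N × Q × Q))} (B : N) :
      TransducesForm δ m α α' q →
      TransducesForm δ p (.nonterminal B :: α) (.nonterminal (B, p, m) :: α') q
  | terminal {p p' q : Q} {d : Δ} {o : Option S} {α : List (Symbol Δ N)}
      {α' : List (Symbol S (N × Q × Q))} :
      δ p d p' o → TransducesForm δ p' α α' q →
      TransducesForm δ p (.terminal d :: α) (o.toList.map .terminal ++ α') q

lemma exists_of_map_terminal_append_eq_append_nonterminal {l : List S} {n : N}
    {α' x' y' : List (Symbol S N)} (h : l.map .terminal ++ α' = x' ++ .nonterminal n :: y') :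
    ∃ x'', x' = l.map .terminal ++ x'' ∧ α' = x'' ++ .nonterminal n :: y' := by
  induction l generalizing x' with
  | nil => exact ⟨x', rfl, h⟩
  | cons a l ih =>
    rcases x' with _ | ⟨s, x'⟩
    · simp at h
    · simp only [List.map_cons, List.cons_append, List.cons.injEq] at h
      obtain ⟨rfl, h⟩ := h
      obtain ⟨x'', rfl, rfl⟩ := ih h
      exact ⟨x'', rfl, rfl⟩

variable {δ : Q → Δ → Q → Option S → Prop}

namespace TransducesForm

lemma append {p m q : Q} {x y : List (Symbol Δ N)} {x' y' : List (Symbol S (N × Q × Q))}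
    (h₁ : TransducesForm δ p x x' m) (h₂ : TransducesForm δ m y y' q) :
    TransducesForm δ p (x ++ y) (x' ++ y') q := by
  induction h₁ with
  | nil => exact h₂
  | nonterminal B _ ih => exact .nonterminal B (ih h₂)
  | terminal hδ _ ih => simpa using terminal hδ (ih h₂)

lemma exists_of_append {p q : Q} {x y : List (Symbol Δ N)} {γ : List (Symbol S (N × Q × Q))}
    (h : TransducesForm δ p (x ++ y) γ q) :
    ∃ x' y' m, γ = x' ++ y' ∧ TransducesForm δ p x x' m ∧ TransducesForm δ m y y' q := by
  induction x generalizing p γ with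
  | nil => exact ⟨[], γ, p, rfl, nil p, h⟩
  | cons s x ih =>
    rcases h with _ | ⟨B, h⟩ | ⟨hδ, h⟩
    · obtain ⟨x', y', m, rfl, h₁, h₂⟩ := ih h
      exact ⟨_, y', m, rfl, nonterminal B h₁, h₂⟩
    · obtain ⟨x', y', m, rfl, h₁, h₂⟩ := ih h
      exact ⟨_, y', m, (List.append_assoc ..).symm, terminal hδ h₁, h₂⟩

lemma eq_of_nonterminal {p q : Q} {B : N} {γ : List (Symbol S (N × Q × Q))}
    (h : TransducesForm δ p [.nonterminal B] γ q) : γ = [.nonterminal (B, p, q)] := by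
  rcases h with _ | ⟨B, ⟨⟩⟩
  rfl

lemma exists_transduces {p q : Q} {α : List (Symbol Δ N)} {w : List S}
    (h : TransducesForm δ p α (w.map .terminal) q) :
    ∃ u, α = u.map .terminal ∧ Transduces δ p u q w := by
  generalize hγ : w.map Symbol.terminal = γ at h
  induction h generalizing w with
  | nil q =>
    obtain rfl := List.map_eq_nil_iff.mp hγ
    exact ⟨[], rfl, .nil q⟩
  | nonterminal => simp [List.map_eq_cons_iff] at hγ
  | @terminal p p' q d o α α' hδ _ ih =>
    obtain ⟨w₁, w₂, rfl, hw₁, rfl⟩ := List.map_eq_append_iff.mp hγ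
    obtain rfl : w₁ = o.toList :=
      List.map_injective_iff.mpr (fun _ _ h => Symbol.terminal.inj h) hw₁
    obtain ⟨u, rfl, hu⟩ := ih rfl
    exact ⟨d :: u, rfl, .cons hδ hu⟩

lemma exists_of_eq_append_nonterminal {p q p₁ q₁ : Q} {B : N} {α : List (Symbol Δ N)}
    {x' y' : List (Symbol S (N × Q × Q))}
    (h : TransducesForm δ p α (x' ++ .nonterminal (B, p₁, q₁) :: y') q) :
    ∃ x y, α = x ++ .nonterminal B :: y ∧
      TransducesForm δ p x x' p₁ ∧ TransducesForm δ q₁ y y' q := by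
  generalize hγ : x' ++ _ = γ at h
  induction h generalizing x' with
  | nil => simp at hγ
  | @nonterminal p m q α α' C h ih =>
    rcases x' with _ | ⟨s, x'⟩
    · obtain ⟨⟨rfl, rfl, rfl⟩, rfl⟩ : (B = C ∧ p₁ = p ∧ q₁ = m) ∧ y' = α' := by simpa using hγ
      exact ⟨[], α, rfl, nil _, h⟩
    · simp only [List.cons_append, List.cons.injEq] at hγ
      obtain ⟨rfl, hγ⟩ := hγ
      obtain ⟨x, y, rfl, h₁, h₂⟩ := ih hγ
      exact ⟨_ :: x, y, rfl, nonterminal C h₁, h₂⟩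
  | @terminal p p' q d o α α' hδ h ih =>
    obtain ⟨x'', rfl, hα'⟩ := exists_of_map_terminal_append_eq_append_nonterminal hγ.symm
    obtain ⟨x, y, rfl, h₁, h₂⟩ := ih hα'.symm
    exact ⟨_ :: x, y, rfl, terminal hδ h₁, h₂⟩

end TransducesForm

lemma Transduces.transducesForm {p q : Q} {u : List Δ} {w : List S}
    (h : Transduces δ p u q w) :
    TransducesForm (N := N) δ p (u.map .terminal) (w.map .terminal) q := by
  induction h with
  | nil => exact .nil _
  | cons hδ _ ih => simpa using .terminal hδ ih

lemma TransducesForm.finite_setOf [Finite Q] [Finite S] (p q : Q) (α : List (Symbol Δ N)) :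
    {γ | TransducesForm δ p α γ q}.Finite := by
  induction α generalizing p with
  | nil => exact (Set.finite_singleton []).subset (by rintro γ ⟨⟩; rfl)
  | cons s α ih =>
    cases s with
    | nonterminal B =>
      refine (Set.finite_iUnion fun m => (ih m).image (.nonterminal (B, p, m) :: ·)).subset ?_
      rintro _ (_ | ⟨B, h⟩ | _)
      exact Set.mem_iUnion.mpr ⟨_, _, h, rfl⟩
    | terminal d =>
      refine (Set.finite_iUnion fun x : Q × Option S =>
        (ih x.1).image (x.2.toList.map .terminal ++ ·)).subset ?_
      rintro _ (_ | _ | ⟨hδ, h⟩)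
      exact Set.mem_iUnion.mpr ⟨(_, _), _, h, rfl⟩

def Language.transduce (L : Language Δ) (δ : Q → Δ → Q → Option S → Prop) (q₀ q₁ : Q) :
    Language S :=
  {w | ∃ u ∈ L, Transduces δ q₀ u q₁ w}

namespace ContextFreeGrammar

def transducedRules (g : ContextFreeGrammar Δ) (δ : Q → Δ → Q → Option S → Prop) :
    Set (ContextFreeRule S (g.NT × Q × Q)) :=
  {r' | ∃ r ∈ g.rules, ∃ p q, r'.input = (r.input, p, q) ∧ TransducesForm δ p r.output r'.output q}

lemma finite_transducedRules [Finite Q] [Finite S] (g : ContextFreeGrammar Δ)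
    (δ : Q → Δ → Q → Option S → Prop) : (g.transducedRules δ).Finite := by
  refine (g.rules.finite_toSet.biUnion fun r _ => Set.finite_iUnion fun p => Set.finite_iUnion
    fun q => (TransducesForm.finite_setOf (δ := δ) p q r.output).image
      fun γ => (⟨(r.input, p, q), γ⟩ : ContextFreeRule S (g.NT × Q × Q))).subset ?_
  rintro ⟨_, γ⟩ ⟨r, hr, p, q, rfl, h⟩
  exact Set.mem_biUnion hr (Set.mem_iUnion.mpr ⟨p, Set.mem_iUnion.mpr ⟨q, γ, h, rfl⟩⟩)

/-- Reducible, so that `(g.transduce δ q₀ q₁).NT` unfolds to `g.NT × Q × Q` during elaboration. -/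
noncomputable abbrev transduce [Finite Q] [Finite S] (g : ContextFreeGrammar Δ)
    (δ : Q → Δ → Q → Option S → Prop) (q₀ q₁ : Q) : ContextFreeGrammar S where
  NT := g.NT × Q × Q
  initial := (g.initial, q₀, q₁)
  rules := (g.finite_transducedRules δ).toFinset

variable [Finite Q] [Finite S] {g : ContextFreeGrammar Δ} {q₀ q₁ : Q}

lemma mem_transduce_rules {r' : ContextFreeRule S (g.NT × Q × Q)} :
    r' ∈ (g.transduce δ q₀ q₁).rules ↔ r' ∈ g.transducedRules δ :=
  Set.Finite.mem_toFinset _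

lemma Produces.of_transduce {α : List (Symbol Δ g.NT)} {α' β' : List (Symbol S (g.NT × Q × Q))}
    {p q : Q} (hp : (g.transduce δ q₀ q₁).Produces α' β') (h : TransducesForm δ p α α' q) :
    ∃ β, g.Produces α β ∧ TransducesForm δ p β β' q := by
  obtain ⟨r', hr', hrw⟩ := hp
  obtain ⟨x', y', rfl, rfl⟩ := hrw.exists_parts
  obtain ⟨r, hr, p₁, q₁, hin, hout⟩ := mem_transduce_rules.mp hr'
  rw [hin, List.append_assoc, List.singleton_append] at h
  obtain ⟨x, y, rfl, h₁, h₂⟩ := h.exists_of_eq_append_nonterminal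
  refine ⟨x ++ r.output ++ y, ⟨r, hr, by simpa using r.rewrites_of_exists_parts x y⟩, ?_⟩
  simpa using h₁.append (hout.append h₂)

lemma Derives.of_transduce {α : List (Symbol Δ g.NT)} {α' β' : List (Symbol S (g.NT × Q × Q))}
    {p q : Q} (hd : (g.transduce δ q₀ q₁).Derives α' β') (h : TransducesForm δ p α α' q) :
    ∃ β, g.Derives α β ∧ TransducesForm δ p β β' q := by
  induction hd with
  | refl => exact ⟨α, .refl α, h⟩
  | tail _ hp ih =>
    obtain ⟨β, hd, hβ⟩ := ih
    obtain ⟨γ, hp, hγ⟩ := hp.of_transduce hβ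
    exact ⟨γ, hd.trans_produces hp, hγ⟩

lemma Derives.transduce {α : List (Symbol Δ g.NT)} {u : List Δ} {w : List S} {p q : Q}
    (hd : g.Derives α (u.map .terminal)) (hu : Transduces δ p u q w) :
    ∃ α', TransducesForm δ p α α' q ∧
      (g.transduce δ q₀ q₁).Derives α' (w.map .terminal) := by
  induction hd using Relation.ReflTransGen.head_induction_on with
  | refl => exact ⟨_, hu.transducesForm, .refl _⟩
  | head hp _ ih =>
    obtain ⟨β', hβ, hd⟩ := ih
    obtain ⟨r, hr, hrw⟩ := hp
    obtain ⟨x, y, rfl, rfl⟩ := hrw.exists_parts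
    obtain ⟨x', rest, m₁, rfl, h₁, hrest⟩ := TransducesForm.exists_of_append (by simpa using hβ)
    obtain ⟨o', y', m₂, rfl, h₂, h₃⟩ := TransducesForm.exists_of_append hrest
    refine ⟨x' ++ .nonterminal (r.input, m₁, m₂) :: y', ?_, .head ⟨⟨(r.input, m₁, m₂), o'⟩,
      mem_transduce_rules.mpr ⟨r, hr, m₁, m₂, rfl, h₂⟩, ?_⟩ hd⟩
    · simpa using h₁.append ((TransducesForm.nonterminal r.input (.nil m₂)).append h₃)
    · simpa using ContextFreeRule.rewrites_of_exists_parts ⟨(r.input, m₁, m₂), o'⟩ x' y'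

theorem language_transduce (g : ContextFreeGrammar Δ) (δ : Q → Δ → Q → Option S → Prop)
    (q₀ q₁ : Q) :
    (g.transduce δ q₀ q₁).language = g.language.transduce δ q₀ q₁ := by
  ext w
  simp only [mem_language_iff]
  constructor
  · intro hd
    obtain ⟨β, hdβ, hβ⟩ := hd.of_transduce (.nonterminal g.initial (.nil q₁))
    obtain ⟨u, rfl, hu⟩ := hβ.exists_transduces
    exact ⟨u, hdβ, hu⟩
  · rintro ⟨u, hd, hu⟩
    obtain ⟨α', hα', hd'⟩ := hd.transduce (q₀ := q₀) (q₁ := q₁) hu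
    rwa [hα'.eq_of_nonterminal] at hd'

end ContextFreeGrammar

theorem Language.IsContextFree.transduce [Finite Q] [Finite S] {L : Language Δ}
    (hL : L.IsContextFree) (δ : Q → Δ → Q → Option S → Prop) (q₀ q₁ : Q) :
    (L.transduce δ q₀ q₁).IsContextFree := by
  obtain ⟨g, rfl⟩ := hL
  exact ⟨g.transduce δ q₀ q₁, g.language_transduce δ q₀ q₁⟩

end Transducer

section InverseHomomorphism
variable {Δ S : Type} (h : S → List Δ)

def Language.comap (L : Language Δ) : Language S :=
  {w | w.flatMap h ∈ L}

/-- The part of the current code word still to be read; `[]` between code words. -/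
def DecodeState : Type :=
  {r : List Δ // r = [] ∨ ∃ a, r <:+ h a}

instance [Finite S] : Finite (DecodeState h) :=
  Set.Finite.to_subtype <| ((Set.finite_iUnion fun a => (h a).tails.finite_toSet).insert []).subset
    fun _ hr => hr.imp id fun ⟨a, ha⟩ => Set.mem_iUnion.mpr ⟨a, (List.mem_tails _ _).mpr ha⟩

def DecodeState.idle : DecodeState h := ⟨[], .inl rfl⟩

def decodeStep (r : DecodeState h) (d : Δ) (t : DecodeState h) (o : Option S) : Prop :=
  (r.1 = [] ∧ ∃ a, o = some a ∧ h a = d :: t.1) ∨ (r.1 = d :: t.1 ∧ o = none)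

variable {h}

lemma Transduces.eq_append_flatMap_of_decodeStep {r q : DecodeState h} {u : List Δ} {w : List S}
    (hu : Transduces (decodeStep h) r u q w) (hq : q = .idle h) : u = r.1 ++ w.flatMap h := by
  induction hu with
  | nil => subst hq; rfl
  | cons hδ _ ih =>
    obtain ⟨hr, a, rfl, ha⟩ | ⟨hr, rfl⟩ := hδ
    · simp [hr, ha, ih hq]
    · simp [hr, ih hq]

lemma transduces_decodeStep_append {v : List Δ} {w : List S}
    (hv : Transduces (decodeStep h) (.idle h) v (.idle h) w) :
    ∀ (r : List Δ) (hr : r = [] ∨ ∃ a, r <:+ h a),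
      Transduces (decodeStep h) ⟨r, hr⟩ (r ++ v) (.idle h) w
  | [], _ => hv
  | d :: t, hr => by
    have ht : t = [] ∨ ∃ a, t <:+ h a :=
      .inr (hr.resolve_left (List.cons_ne_nil d t) |>.imp fun _ => (List.suffix_cons d t).trans)
    exact .cons (p' := ⟨t, ht⟩) (o := none) (.inr ⟨rfl, rfl⟩)
      (transduces_decodeStep_append hv t ht)

lemma transduces_decodeStep_flatMap (hh : ∀ a, h a ≠ []) (w : List S) :
    Transduces (decodeStep h) (.idle h) (w.flatMap h) (.idle h) w := by
  induction w with
  | nil => exact .nil _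
  | cons a w ih =>
    obtain ⟨d, t, hdt⟩ := List.exists_cons_of_ne_nil (hh a)
    have ht : t = [] ∨ ∃ a, t <:+ h a := .inr ⟨a, hdt ▸ List.suffix_cons d t⟩
    have hstep : decodeStep h (.idle h) d ⟨t, ht⟩ (some a) := .inl ⟨rfl, a, rfl, hdt⟩
    rw [List.flatMap_cons, hdt]
    exact .cons hstep (transduces_decodeStep_append ih t ht)

theorem Language.IsContextFree.comap [Finite S] {L : Language Δ} (hL : L.IsContextFree)
    (hh : ∀ a, h a ≠ []) : (L.comap h).IsContextFree := by
  have hcomap : L.comap h = L.transduce (decodeStep h) (.idle h) (.idle h) := by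
    ext w
    constructor
    · intro hw
      exact ⟨_, hw, transduces_decodeStep_flatMap hh w⟩
    · rintro ⟨u, hu, hrun⟩
      obtain rfl := hrun.eq_append_flatMap_of_decodeStep rfl
      exact hu
  rw [hcomap]
  exact hL.transduce _ _ _

end InverseHomomorphism

theorem Language.isContextFree_of_forall_mem {T : Type} [Finite T] {L : Language T}
    (hL : ∀ w, w ∈ L) : L.IsContextFree := by
  classical
  let g : ContextFreeGrammar T :=
    { NT := Unit
      initial := ()
      rules := insert (⟨(), []⟩ : ContextFreeRule T Unit) (Set.finite_range fun a : T =>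
        (⟨(), [.terminal a, .nonterminal ()]⟩ : ContextFreeRule T Unit)).toFinset }
  have hg (w : List T) : g.Derives [.nonterminal ()] (w.map .terminal) := by
    induction w with
    | nil => exact .single ⟨_, Finset.mem_insert_self _ _, .input_output⟩
    | cons a w ih =>
      refine .head ⟨⟨(), [.terminal a, .nonterminal ()]⟩,
        Finset.mem_insert_of_mem (by simp), .input_output⟩ ?_
      exact ih.append_left [.terminal a]
  exact ⟨g, Set.Subset.antisymm (fun w _ => hL w) fun w _ => hg w⟩

section WordProblem
variable {X X₁ X₂ G : Type} [Group G]

lemma wordProblemHom_surjective {f : X → G} (hf : Subgroup.closure (Set.range f) = ⊤) :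
    Function.Surjective (wordProblemHom f) := by
  rw [← MonoidHom.mrange_eq_top, wordProblemHom, FreeMonoid.mrange_lift, Set.Sum.elim_range,
    ← Set.inv_range, ← Subgroup.closure_toSubmonoid, hf, Subgroup.top_toSubmonoid]

lemma wordProblem_eq_comap {f₁ : X₁ → G} {f₂ : X₂ → G} (c : X₂ ⊕ X₂ → List (X₁ ⊕ X₁))
    (hc : ∀ a, wordProblemHom f₁ (.ofList (c a)) = wordProblemHom f₂ (.of a)) :
    wordProblem f₂ = (wordProblem f₁).comap c := by
  have key (w : List (X₂ ⊕ X₂)) :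
      wordProblemHom f₁ (.ofList (w.flatMap c)) = wordProblemHom f₂ (.ofList w) := by
    induction w with
    | nil => rfl
    | cons a w ih =>
      rw [List.flatMap_cons, FreeMonoid.ofList_append, FreeMonoid.ofList_cons, map_mul, map_mul,
        hc, ih]
  ext w
  change wordProblemHom f₂ _ = 1 ↔ wordProblemHom f₁ _ = 1
  rw [key]

end WordProblem

theorem stmt_3_general {X₁ X₂ G : Type} [Group G] [Finite X₂]
    (f₁ : X₁ → G) (f₂ : X₂ → G)
    (h₁ : Subgroup.closure (Set.range f₁) = ⊤)
    (hcf : (wordProblem f₁).IsContextFree) :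
    (wordProblem f₂).IsContextFree := by
  rcases isEmpty_or_nonempty X₁ with hX₁ | ⟨⟨x₀⟩⟩
  · have : Subsingleton G := Subgroup.subsingleton_iff.mp <| subsingleton_of_bot_eq_top <| by
      rw [← h₁, Set.range_eq_empty, Subgroup.closure_empty]
    exact Language.isContextFree_of_forall_mem fun _ => Subsingleton.elim _ _
  · obtain ⟨word, hword⟩ := (wordProblemHom_surjective h₁).hasRightInverse
    let c (a : X₂ ⊕ X₂) : List (X₁ ⊕ X₁) :=
      .inl x₀ :: .inr x₀ :: (word (wordProblemHom f₂ (.of a))).toList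
    have hc (a : X₂ ⊕ X₂) : wordProblemHom f₁ (.ofList (c a)) = wordProblemHom f₂ (.of a) := by
      rw [FreeMonoid.ofList_cons, FreeMonoid.ofList_cons, FreeMonoid.ofList_toList, map_mul,
        map_mul, hword]
      simp [wordProblemHom]
    rw [wordProblem_eq_comap c hc]
    exact hcf.comap fun _ => List.cons_ne_nil _ _

theorem stmt_3 {X₁ X₂ G : Type} [Group G] [Finite X₁] [Finite X₂]
    (f₁ : X₁ → G) (f₂ : X₂ → G)
    (h₁ : Subgroup.closure (Set.range f₁) = ⊤)
    (h₂ : Subgroup.closure (Set.range f₂) = ⊤)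
    (hcf : (wordProblem f₁).IsContextFree) :
    (wordProblem f₂).IsContextFree :=
  stmt_3_general f₁ f₂ h₁ hcf
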